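/- arXiv:2410.10623 — 2 statements merged into one kernel-verified Lean document; each statement's English description precedes it below -/
import Mathlib

section
/- Let h, x* ∈ R^n with ‖h‖ ≤ R‖x*‖, and H = 6hhᵀ + 6h x*ᵀ + 6 x* hᵀ + 4 x* x*ᵀ + 3‖h‖² I_n + 6(hᵀx*) I_n + 2‖x*‖² I_n. Then x*ᵀ H x* ≥ (6 − 18R)‖x*‖⁴. -/
/-! With `s = ⟪h, x*⟫`, the quadratic form expands to
`6 s² + 18 s ‖x*‖² + 6 ‖x*‖⁴ + 3 ‖h‖² ‖x*‖²`. Every term but `18 s ‖x*‖²` is nonnegative, and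
Cauchy–Schwarz with `‖h‖ ≤ R ‖x*‖` gives `s ≥ -R ‖x*‖²`. -/

open Matrix

theorem sum_sum_mul_hessian_mul_eq {ι R : Type*} [Fintype ι] [DecidableEq ι] [CommRing R]
    (h x : ι → R) (c : R) :
    ∑ i, ∑ j, x i * (6 * h i * h j + 6 * h i * x j + 6 * x i * h j + 4 * x i * x j
        + c * (if i = j then 1 else 0)) * x j
      = 6 * (h ⬝ᵥ x) ^ 2 + 12 * (h ⬝ᵥ x) * (x ⬝ᵥ x) + 4 * (x ⬝ᵥ x) ^ 2 + c * (x ⬝ᵥ x) := by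
  have rank_one (a : R) (u v : ι → R) :
      ∑ i, ∑ j, x i * (a * u i * v j) * x j = a * (u ⬝ᵥ x) * (v ⬝ᵥ x) := by
    rw [mul_assoc, dotProduct, dotProduct, Finset.sum_mul_sum, Finset.mul_sum]
    refine Finset.sum_congr rfl fun i _ => ?_
    rw [Finset.mul_sum]
    exact Finset.sum_congr rfl fun j _ => by ring
  have identity : ∑ i, ∑ j, x i * (c * if i = j then 1 else 0) * x j = c * (x ⬝ᵥ x) := by
    simp only [mul_ite, mul_one, mul_zero, ite_mul, zero_mul, Finset.sum_ite_eq,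
      Finset.mem_univ, if_true, dotProduct, Finset.mul_sum]
    exact Finset.sum_congr rfl fun i _ => by ring
  simp only [mul_add, add_mul, Finset.sum_add_distrib, rank_one, identity]
  ring

section InnerProductSpace

variable {E : Type*} [NormedAddCommGroup E] [InnerProductSpace ℝ E] {R : ℝ} {h x : E}

theorem neg_mul_norm_sq_le_inner_of_norm_le (hh : ‖h‖ ≤ R * ‖x‖) :
    -(R * ‖x‖ ^ 2) ≤ inner ℝ h x := by
  have := neg_abs_le (inner ℝ h x)
  have := abs_real_inner_le_norm h x
  nlinarith [mul_le_mul_of_nonneg_right hh (norm_nonneg x)]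

theorem hessian_signal_form_lower_bound (hh : ‖h‖ ≤ R * ‖x‖) :
    (6 - 18 * R) * ‖x‖ ^ 4 ≤ 6 * inner ℝ h x ^ 2 + 12 * inner ℝ h x * ‖x‖ ^ 2
      + 4 * (‖x‖ ^ 2) ^ 2 + (3 * ‖h‖ ^ 2 + 6 * inner ℝ h x + 2 * ‖x‖ ^ 2) * ‖x‖ ^ 2 := by
  nlinarith [mul_le_mul_of_nonneg_right (neg_mul_norm_sq_le_inner_of_norm_le hh)
    (sq_nonneg ‖x‖), sq_nonneg (inner ℝ h x), mul_nonneg (sq_nonneg ‖h‖) (sq_nonneg ‖x‖)]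

end InnerProductSpace

/-- Lower bound on the Hessian quadratic form in the signal direction:
with `‖h‖ ≤ R‖x*‖`, `x*ᵀ H x* ≥ (6 − 18R)‖x*‖⁴` where
`H = 6hhᵀ + 6h x*ᵀ + 6 x* hᵀ + 4 x* x*ᵀ + 3‖h‖² I + 6(hᵀx*) I + 2‖x*‖² I`. -/
theorem stmt8 {n : ℕ} (R : ℝ)
    (h xstar : EuclideanSpace ℝ (Fin n)) (hh : ‖h‖ ≤ R * ‖xstar‖)
    (H : Matrix (Fin n) (Fin n) ℝ)
    (hH : H = Matrix.of fun i j =>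
      6 * h i * h j + 6 * h i * xstar j + 6 * xstar i * h j + 4 * xstar i * xstar j
        + (3 * ‖h‖^2 + 6 * (inner ℝ h xstar : ℝ) + 2 * ‖xstar‖^2) * (if i = j then 1 else 0)) :
    (∑ i, ∑ j, xstar i * H i j * xstar j) ≥ (6 - 18 * R) * ‖xstar‖^4 := by
  have inner_eq : h.ofLp ⬝ᵥ xstar.ofLp = inner ℝ h xstar := by
    rw [EuclideanSpace.inner_eq_star_dotProduct, dotProduct_comm, star_trivial]
  have norm_sq_eq : xstar.ofLp ⬝ᵥ xstar.ofLp = ‖xstar‖ ^ 2 := by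
    rw [← real_inner_self_eq_norm_sq, EuclideanSpace.inner_eq_star_dotProduct, star_trivial]
  simp only [hH, Matrix.of_apply]
  rw [sum_sum_mul_hessian_mul_eq, inner_eq, norm_sq_eq]
  exact hessian_signal_form_lower_bound hh
end

section
/- Let f: R^n → R be twice differentiable, α-strongly convex and β-smooth on a convex set containing the segment from x_t to x*, with ∇f(x*) = 0. If x_{t+1} = x_t − η g where η ≤ 2/(α+β) and ‖g − ∇f(x_t)‖ ≤ A‖x_t − x*‖ + B, then ‖x_{t+1} − x*‖ ≤ (√(1 − 2ηαβ/(α+β)) + ηA)‖x_t − x*‖ + ηB. -/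
/-!
The gradient step `T y = y - η ∇f y` fixes `x*`, and on the segment its derivative `I - η ∇²f` is
symmetric with quadratic form between `1 - ηβ` and `1 - ηα`, so it has operator norm at most
`max |1 - ηα| |1 - ηβ|`; for `η ≤ 2/(α+β)` this is at most `√(1 - 2ηαβ/(α+β))`. The mean value
inequality makes `T` a contraction with that constant along the segment, and the gradient error
`η (g - ∇f x_t)` adds at most `η (A ‖x_t - x*‖ + B)`.
-/

open Filter Topology InnerProductSpace
open scoped RealInnerProductSpace NNReal

theorem abs_one_sub_mul_le_sqrt {α β η : ℝ} (hαβ : 0 < α + β) (hη₀ : 0 ≤ η)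
    (hη : η ≤ 2 / (α + β)) :
    |1 - η * α| ≤ √(1 - 2 * η * α * β / (α + β)) := by
  refine Real.abs_le_sqrt ?_
  have key : 1 - 2 * η * α * β / (α + β) - (1 - η * α) ^ 2 = η * α ^ 2 * (2 / (α + β) - η) := by
    field_simp
    ring
  nlinarith [mul_nonneg (mul_nonneg hη₀ (sq_nonneg α)) (sub_nonneg.2 hη)]

theorem max_abs_one_sub_mul_le_sqrt {α β η : ℝ} (hαβ : 0 < α + β) (hη₀ : 0 ≤ η)
    (hη : η ≤ 2 / (α + β)) :
    max |1 - η * α| |1 - η * β| ≤ √(1 - 2 * η * α * β / (α + β)) := by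
  refine max_le (abs_one_sub_mul_le_sqrt hαβ hη₀ hη) ?_
  rw [add_comm] at hαβ hη ⊢
  rw [mul_right_comm _ α β]
  exact abs_one_sub_mul_le_sqrt hαβ hη₀ hη

variable {E : Type*} [NormedAddCommGroup E] [InnerProductSpace ℝ E]

namespace ContinuousLinearMap

theorem norm_le_of_abs_inner_apply_self_le {T : E →L[ℝ] E} (hT : (T : E →ₗ[ℝ] E).IsSymmetric)
    {M : ℝ} (hM : 0 ≤ M) (h : ∀ v, |⟪T v, v⟫| ≤ M * ‖v‖ ^ 2) : ‖T‖ ≤ M := by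
  rw [T.norm_eq_iSup_rayleighQuotient hT]
  refine ciSup_le fun v => ?_
  rcases eq_or_ne v 0 with rfl | hv
  · simpa using hM
  rw [rayleighQuotient, reApplyInnerSelf_apply, RCLike.re_to_real, abs_div, abs_sq,
    div_le_iff₀ (by positivity)]
  exact h v

theorem norm_id_sub_smul_le {T : E →L[ℝ] E} (hT : (T : E →ₗ[ℝ] E).IsSymmetric)
    {α β η : ℝ} (hη : 0 ≤ η) (hαT : ∀ v, α * ‖v‖ ^ 2 ≤ ⟪T v, v⟫)
    (hTβ : ∀ v, ⟪T v, v⟫ ≤ β * ‖v‖ ^ 2) :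
    ‖ContinuousLinearMap.id ℝ E - η • T‖ ≤ max |1 - η * α| |1 - η * β| := by
  have hsymm : ((ContinuousLinearMap.id ℝ E - η • T : E →L[ℝ] E) : E →ₗ[ℝ] E).IsSymmetric :=
    LinearMap.IsSymmetric.id.sub (hT.smul (by simp))
  refine norm_le_of_abs_inner_apply_self_le hsymm (le_max_of_le_left (abs_nonneg _)) fun v => ?_
  have hform : ⟪(ContinuousLinearMap.id ℝ E - η • T) v, v⟫ = ‖v‖ ^ 2 - η * ⟪T v, v⟫ := by
    simp only [sub_apply, smul_apply, id_apply, inner_sub_left, real_inner_smul_left,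
      real_inner_self_eq_norm_sq]
  have hupper := (le_abs_self _).trans (le_max_left |1 - η * α| |1 - η * β|)
  have hlower := (neg_le_neg (le_max_right |1 - η * α| _)).trans (neg_abs_le (1 - η * β))
  rw [hform, abs_le]
  constructor
  · nlinarith [mul_le_mul_of_nonneg_left (hTβ v) hη, sq_nonneg ‖v‖]
  · nlinarith [mul_le_mul_of_nonneg_left (hαT v) hη, sq_nonneg ‖v‖]

theorem antilipschitzWith_of_le_inner_apply_self (T : E →L[ℝ] E) {α : ℝ} (hα : 0 < α)
    (h : ∀ v, α * ‖v‖ ^ 2 ≤ ⟪T v, v⟫) : AntilipschitzWith (Real.toNNReal α⁻¹) T := by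
  refine T.antilipschitz_of_bound fun v => ?_
  rw [Real.coe_toNNReal _ (inv_nonneg.2 hα.le), inv_mul_eq_div, le_div_iff₀ hα]
  rcases eq_or_ne v 0 with rfl | hv
  · simp
  have := (h v).trans (real_inner_le_norm (T v) v)
  rw [sq] at this
  nlinarith [norm_pos_iff.2 hv]

end ContinuousLinearMap

variable [CompleteSpace E]

/-- Where `f` is not differentiable its gradient takes the junk value `0`, which a locally
injective `∇f` avoids on a punctured neighbourhood of `x`. -/
theorem eventually_differentiableAt_of_hasFDerivAt_gradient {f : E → ℝ} {x : E} {H : E →L[ℝ] E}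
    (hf : DifferentiableAt ℝ f x) (hH : HasFDerivAt (gradient f) H x) {C : ℝ≥0}
    (hC : AntilipschitzWith C H) : ∀ᶠ y in 𝓝 x, DifferentiableAt ℝ f y := by
  have hne : ∀ᶠ y in 𝓝[≠] x, gradient f y ≠ 0 := hH.eventually_ne ⟨C, hC⟩
  filter_upwards [eventually_nhdsWithin_iff.1 hne] with y hy
  by_cases hyx : y = x
  · exact hyx ▸ hf
  · exact not_not.1 (mt gradient_eq_zero_of_not_differentiableAt (hy hyx))

theorem isSymmetric_fderiv_gradient {f : E → ℝ} {x : E} {α : ℝ} (hα : 0 < α)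
    (hf : DifferentiableAt ℝ f x) (hgrad : DifferentiableAt ℝ (gradient f) x)
    (hcoer : ∀ v, α * ‖v‖ ^ 2 ≤ ⟪fderiv ℝ (gradient f) x v, v⟫) :
    (fderiv ℝ (gradient f) x : E →ₗ[ℝ] E).IsSymmetric := by
  set H := fderiv ℝ (gradient f) x
  have hH : HasFDerivAt (gradient f) H x := hgrad.hasFDerivAt
  have hf' : ∀ᶠ y in 𝓝 x, HasFDerivAt f (toDual ℝ E (gradient f y)) y :=
    (eventually_differentiableAt_of_hasFDerivAt_gradient hf hH
      (H.antilipschitzWith_of_le_inner_apply_self hα hcoer)).mono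
      fun y hy => hy.hasGradientAt
  have hf'' : HasFDerivAt (fun y => toDual ℝ E (gradient f y))
      ((toDual ℝ E).toContinuousLinearEquiv.toContinuousLinearMap.comp H) x :=
    (toDual ℝ E).toContinuousLinearEquiv.hasFDerivAt.comp x hH
  intro u v
  simpa [real_inner_comm _ u] using second_derivative_symmetric_of_eventually hf' hf'' u v

theorem norm_gradientStep_sub_le {f : E → ℝ} {s : Set E} (hs : Convex ℝ s) {η C : ℝ}
    (hgrad : ∀ x ∈ s, DifferentiableAt ℝ (gradient f) x)
    (hbound : ∀ x ∈ s, ‖ContinuousLinearMap.id ℝ E - η • fderiv ℝ (gradient f) x‖ ≤ C)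
    {x y : E} (hx : x ∈ s) (hy : y ∈ s) :
    ‖(x - η • gradient f x) - (y - η • gradient f y)‖ ≤ C * ‖x - y‖ :=
  hs.norm_image_sub_le_of_norm_hasFDerivWithin_le
    (fun z hz => ((hasFDerivAt_id z).sub ((hgrad z hz).hasFDerivAt.const_smul η)).hasFDerivWithinAt)
    hbound hy hx

theorem stmt9_general {n : ℕ} (f : EuclideanSpace ℝ (Fin n) → ℝ)
    (s : Set (EuclideanSpace ℝ (Fin n)))
    (α β η A B : ℝ) (hα : 0 < α) (hβ : 0 < β) (hηpos : 0 < η)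
    (hη : η ≤ 2 / (α + β))
    (xt xstar : EuclideanSpace ℝ (Fin n)) (hseg : segment ℝ xt xstar ⊆ s)
    (hdiff : ∀ x ∈ s, DifferentiableAt ℝ f x)
    (hdiff2 : ∀ x ∈ s, DifferentiableAt ℝ (gradient f) x)
    (hhess : ∀ x ∈ s, ∀ v : EuclideanSpace ℝ (Fin n),
      α * ‖v‖^2 ≤ (inner ℝ ((fderiv ℝ (gradient f) x) v) v : ℝ) ∧
      (inner ℝ ((fderiv ℝ (gradient f) x) v) v : ℝ) ≤ β * ‖v‖^2)
    (hcrit : gradient f xstar = 0)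
    (g : EuclideanSpace ℝ (Fin n))
    (hg : ‖g - gradient f xt‖ ≤ A * ‖xt - xstar‖ + B) :
    ‖(xt - η • g) - xstar‖
      ≤ (Real.sqrt (1 - 2 * η * α * β / (α + β)) + η * A) * ‖xt - xstar‖ + η * B := by
  set C := √(1 - 2 * η * α * β / (α + β))
  have hcontract : ∀ x ∈ segment ℝ xt xstar,
      ‖ContinuousLinearMap.id ℝ _ - η • fderiv ℝ (gradient f) x‖ ≤ C := by
    intro x hx
    have hlow v := (hhess x (hseg hx) v).1
    have hup v := (hhess x (hseg hx) v).2
    have hsymm := isSymmetric_fderiv_gradient hα (hdiff x (hseg hx)) (hdiff2 x (hseg hx)) hlow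
    exact (ContinuousLinearMap.norm_id_sub_smul_le hsymm hηpos.le hlow hup).trans
      (max_abs_one_sub_mul_le_sqrt (add_pos hα hβ) hηpos.le hη)
  have hstep := norm_gradientStep_sub_le (convex_segment xt xstar)
    (fun x hx => hdiff2 x (hseg hx)) hcontract (left_mem_segment ℝ xt xstar)
    (right_mem_segment ℝ xt xstar)
  rw [hcrit, smul_zero, sub_zero] at hstep
  calc ‖(xt - η • g) - xstar‖
      = ‖(xt - η • gradient f xt - xstar) - η • (g - gradient f xt)‖ := by
        rw [smul_sub]; abel_nf
    _ ≤ C * ‖xt - xstar‖ + η * (A * ‖xt - xstar‖ + B) := by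
        grw [norm_sub_le, hstep, norm_smul, Real.norm_of_nonneg hηpos.le, hg]
    _ = (C + η * A) * ‖xt - xstar‖ + η * B := by ring

/-- Robust gradient descent contraction: if `f` is twice differentiable with
`α I ⪯ ∇²f ⪯ β I` on a convex set containing the segment from `xt` to `x*`,
`∇f(x*) = 0`, `x_{t+1} = x_t − η g` with `η ≤ 2/(α+β)` and
`‖g − ∇f(x_t)‖ ≤ A‖x_t − x*‖ + B`, then
`‖x_{t+1} − x*‖ ≤ (√(1 − 2ηαβ/(α+β)) + ηA)‖x_t − x*‖ + ηB`. -/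
theorem stmt9 {n : ℕ} (f : EuclideanSpace ℝ (Fin n) → ℝ)
    (s : Set (EuclideanSpace ℝ (Fin n))) (hs : Convex ℝ s)
    (α β η A B : ℝ) (hα : 0 < α) (hβ : 0 < β) (hηpos : 0 < η)
    (hη : η ≤ 2 / (α + β)) (hA : 0 ≤ A) (hB : 0 ≤ B)
    (xt xstar : EuclideanSpace ℝ (Fin n)) (hseg : segment ℝ xt xstar ⊆ s)
    (hdiff : ∀ x ∈ s, DifferentiableAt ℝ f x)
    (hdiff2 : ∀ x ∈ s, DifferentiableAt ℝ (gradient f) x)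
    (hhess : ∀ x ∈ s, ∀ v : EuclideanSpace ℝ (Fin n),
      α * ‖v‖^2 ≤ (inner ℝ ((fderiv ℝ (gradient f) x) v) v : ℝ) ∧
      (inner ℝ ((fderiv ℝ (gradient f) x) v) v : ℝ) ≤ β * ‖v‖^2)
    (hcrit : gradient f xstar = 0)
    (g : EuclideanSpace ℝ (Fin n))
    (hg : ‖g - gradient f xt‖ ≤ A * ‖xt - xstar‖ + B) :
    ‖(xt - η • g) - xstar‖
      ≤ (Real.sqrt (1 - 2 * η * α * β / (α + β)) + η * A) * ‖xt - xstar‖ + η * B :=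
  stmt9_general f s α β η A B hα hβ hηpos hη xt xstar hseg hdiff hdiff2 hhess hcrit g hg
end
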